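/- Let a, b, c, d be real numbers with b ≠ 0 and d ≠ 0, let a₀, a₁, a₂ : ℝ → ℝ, let U ⊆ ℝ be open, and let y : ℝ → ℝ be five times continuously differentiable on U with y⁽⁵⁾(x) + a₂(x)y″(x) + a₁(x)y′(x) + a₀(x)y(x) = 0 for all x ∈ U. Define φ(x̄) = (x̄ − c(1 + a·x̄))/(b(1 + a·x̄)), t(x̄) = 1 + a·x̄, and ȳ(x̄) = d·t(x̄)⁴·y(φ(x̄)). Then for every x̄ with t(x̄) ≠ 0 and φ(x̄) ∈ U, one has ȳ⁽⁵⁾(x̄) + ā₂(x̄)ȳ″(x̄) + ā₁(x̄)ȳ′(x̄) + ā₀(x̄)ȳ(x̄) = 0, where ā₂(x̄) = a₂(φ(x̄))/(b³ t(x̄)⁶), ā₁(x̄) = a₁(φ(x̄))/(b⁴ t(x̄)⁸) − 6a·a₂(φ(x̄))/(b³ t(x̄)⁷), and ā₀(x̄) = a₀(φ(x̄))/(b⁵ t(x̄)¹⁰) − 4a·a₁(φ(x̄))/(b⁴ t(x̄)⁹) + 12a²·a₂(φ(x̄))/(b³ t(x̄)⁸). -/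

import Mathlib

/-!
Write `t = 1 + a x̄`. Since `φ' = t⁻² / b`, a term `tᵐ y⁽ʲ⁾(φ) / bʲ` differentiates into
`m a tᵐ⁻¹ y⁽ʲ⁾(φ) / bʲ + tᵐ⁻² y⁽ʲ⁺¹⁾(φ) / bʲ⁺¹`, so the `k`-th derivative of
`ȳ = d t⁴ y(φ)` is `d ∑ⱼ C(k, j) (4 - j)!/(4 - k)! aᵏ⁻ʲ t⁴⁻ᵏ⁻ʲ y⁽ʲ⁾(φ) / bʲ`. At `k = 5` the
falling factorial `(4 - j)!/(4 - k)!` vanishes for every `j < 5`, leaving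
`ȳ⁽⁵⁾ = d y⁽⁵⁾(φ) / (b⁵ t⁶)`. Substituting `ȳ, ȳ', ȳ''` into the transformed equation then gives
exactly `d / (b⁵ t⁶)` times the original equation at `φ(x̄)`.
-/

/-- The point transformation of the independent variable:
`φ(x̄) = (x̄ − c(1 + a x̄)) / (b(1 + a x̄))`. -/
noncomputable def phi (a b c : ℝ) (x : ℝ) : ℝ :=
  (x - c * (1 + a * x)) / (b * (1 + a * x))

/-- The transformed dependent variable for the fifth-order canonical form:
`ȳ(x̄) = d (1+a x̄)⁴ y(φ(x̄))`. -/
noncomputable def ybar (a b c d : ℝ) (y : ℝ → ℝ) (x : ℝ) : ℝ :=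
  d * (1 + a * x) ^ 4 * y (phi a b c x)

open Finset
open scoped ContDiff

section IteratedDeriv

variable {𝕜 : Type*} [NontriviallyNormedField 𝕜] {F : Type*} [NormedAddCommGroup F]
  [NormedSpace 𝕜 F]

theorem ContDiffAt.hasDerivAt_iteratedDeriv {f : 𝕜 → F} {n : ℕ∞ω} {m : ℕ} {x : 𝕜}
    (hf : ContDiffAt 𝕜 n f x) (hmn : (m : ℕ∞ω) < n) :
    HasDerivAt (iteratedDeriv m f) (iteratedDeriv (m + 1) f x) x := by
  have hd : DifferentiableAt 𝕜 (iteratedDeriv m f) x := by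
    rw [iteratedDeriv_eq_equiv_comp]
    exact (ContinuousMultilinearMap.piFieldEquiv 𝕜 (Fin m) F).symm.differentiableAt.comp x
      (hf.differentiableAt_iteratedFDeriv hmn)
  rw [iteratedDeriv_succ]
  exact hd.hasDerivAt

theorem eqOn_iteratedDeriv_of_hasDerivAt {s : Set 𝕜} (hs : IsOpen s) {g : ℕ → 𝕜 → F} {n : ℕ}
    (hg : ∀ k < n, ∀ x ∈ s, HasDerivAt (g k) (g (k + 1) x) x) {k : ℕ} (hk : k ≤ n) :
    Set.EqOn (iteratedDeriv k (g 0)) (g k) s := by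
  induction k with
  | zero => exact fun _ _ ↦ rfl
  | succ k ih =>
    intro x hx
    rw [iteratedDeriv_succ, ((ih (by omega)).eventuallyEq_of_mem (hs.mem_nhds hx)).deriv_eq,
      (hg k hk x hx).deriv]

end IteratedDeriv

section Moebius

variable {a b c d : ℝ} {y : ℝ → ℝ} {U : Set ℝ} {x : ℝ}

theorem hasDerivAt_phi (hb : b ≠ 0) (hx : 1 + a * x ≠ 0) :
    HasDerivAt (phi a b c) ((1 + a * x) ^ (-2 : ℤ) / b) x := by
  have ht : HasDerivAt (fun w ↦ 1 + a * w) a x := by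
    simpa using ((hasDerivAt_id x).const_mul a).const_add 1
  refine (((hasDerivAt_id x).sub (ht.const_mul c)).div (ht.const_mul b)
    (mul_ne_zero hb hx)).congr_deriv ?_
  simp only [zpow_neg, zpow_two, Pi.sub_apply, id]
  field_simp
  ring

theorem isOpen_setOf_phi_mem (hb : b ≠ 0) (hU : IsOpen U) :
    IsOpen {x | 1 + a * x ≠ 0 ∧ phi a b c x ∈ U} := by
  have ht : IsOpen {x : ℝ | 1 + a * x ≠ 0} := isOpen_ne_fun (by fun_prop) continuous_const
  exact ContinuousOn.isOpen_inter_preimage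
    (fun x hx ↦ (hasDerivAt_phi (c := c) hb hx).continuousAt.continuousWithinAt) ht hU

noncomputable def derivTerm (a b c : ℝ) (y : ℝ → ℝ) (m : ℤ) (j : ℕ) (x : ℝ) : ℝ :=
  (1 + a * x) ^ m * iteratedDeriv j y (phi a b c x) / b ^ j

theorem hasDerivAt_derivTerm {n : ℕ∞ω} {j : ℕ} (hb : b ≠ 0) (hU : IsOpen U)
    (hy : ContDiffOn ℝ n y U) (hj : (j : ℕ∞ω) < n) (hx : 1 + a * x ≠ 0) (hφ : phi a b c x ∈ U)
    (m : ℤ) :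
    HasDerivAt (derivTerm a b c y m j)
      (m * a * derivTerm a b c y (m - 1) j x + derivTerm a b c y (m - 2) (j + 1) x) x := by
  have ht : HasDerivAt (fun w ↦ 1 + a * w) a x := by
    simpa using ((hasDerivAt_id x).const_mul a).const_add 1
  have hyj := ((hy.contDiffAt (hU.mem_nhds hφ)).hasDerivAt_iteratedDeriv hj).comp x
    (hasDerivAt_phi hb hx)
  refine ((((hasDerivAt_zpow m _ (Or.inl hx)).comp x ht).mul hyj).div_const (b ^ j)).congr_deriv
    ?_
  simp only [derivTerm, Function.comp_apply, zpow_sub₀ hx, zpow_one, pow_succ]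
  field_simp

noncomputable def ybarDerivFormula (a b c d : ℝ) (y : ℝ → ℝ) (k : ℕ) (x : ℝ) : ℝ :=
  d * ∑ j ∈ range (k + 1), ((k.choose j * (4 - j).descFactorial (k - j) : ℕ) : ℝ) * a ^ (k - j)
    * derivTerm a b c y (4 - k - j) j x

theorem ybarDerivFormula_zero : ybarDerivFormula a b c d y 0 = ybar a b c d y := by
  ext x
  simp [ybarDerivFormula, derivTerm, ybar, mul_assoc]

theorem hasDerivAt_ybarDerivFormula {k : ℕ} (hk : k < 5) (hb : b ≠ 0) (hU : IsOpen U)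
    (hy : ContDiffOn ℝ 5 y U) (hx : 1 + a * x ≠ 0) (hφ : phi a b c x ∈ U) :
    HasDerivAt (ybarDerivFormula a b c d y k) (ybarDerivFormula a b c d y (k + 1) x) x := by
  have hterm : ∀ j ∈ range (k + 1), HasDerivAt (derivTerm a b c y (4 - k - j) j)
      ((4 - k - j : ℤ) * a * derivTerm a b c y (4 - k - j - 1) j x
        + derivTerm a b c y (4 - k - j - 2) (j + 1) x) x := fun j hj ↦
    hasDerivAt_derivTerm hb hU hy (by norm_cast; rw [mem_range] at hj; omega) hx hφ _
  refine ((HasDerivAt.fun_sum fun j hj ↦ (hterm j hj).const_mul _).const_mul d).congr_deriv ?_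
  rw [ybarDerivFormula]
  congr 1
  interval_cases k <;> norm_num [sum_range_succ, Nat.choose] <;> ring

theorem ybarDerivFormula_one : ybarDerivFormula a b c d y 1 x
    = d * (4 * a * (1 + a * x) ^ 3 * y (phi a b c x)
      + (1 + a * x) ^ 2 * deriv y (phi a b c x) / b) := by
  rw [ybarDerivFormula]
  congr 1
  norm_num [derivTerm, sum_range_succ]
  ring

theorem ybarDerivFormula_two : ybarDerivFormula a b c d y 2 x
    = d * (12 * a ^ 2 * (1 + a * x) ^ 2 * y (phi a b c x)
      + 6 * a * (1 + a * x) * deriv y (phi a b c x) / b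
      + iteratedDeriv 2 y (phi a b c x) / b ^ 2) := by
  rw [ybarDerivFormula]
  congr 1
  norm_num [derivTerm, sum_range_succ]
  ring

theorem ybarDerivFormula_five : ybarDerivFormula a b c d y 5 x
    = d * iteratedDeriv 5 y (phi a b c x) / (b ^ 5 * (1 + a * x) ^ 6) := by
  norm_num [ybarDerivFormula, derivTerm, sum_range_succ]
  field_simp

end Moebius

theorem stmt_5_general (a b c d : ℝ) (hb : b ≠ 0)
    (a0 a1 a2 : ℝ → ℝ) (U : Set ℝ) (hU : IsOpen U) (y : ℝ → ℝ)
    (hy : ContDiffOn ℝ 5 y U)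
    (hode : ∀ x ∈ U,
      iteratedDeriv 5 y x + a2 x * iteratedDeriv 2 y x
        + a1 x * deriv y x + a0 x * y x = 0)
    (xb : ℝ) (ht : 1 + a * xb ≠ 0) (hφ : phi a b c xb ∈ U) :
    iteratedDeriv 5 (ybar a b c d y) xb
      + (a2 (phi a b c xb) / (b ^ 3 * (1 + a * xb) ^ 6))
          * iteratedDeriv 2 (ybar a b c d y) xb
      + (a1 (phi a b c xb) / (b ^ 4 * (1 + a * xb) ^ 8)
          - 6 * a * a2 (phi a b c xb) / (b ^ 3 * (1 + a * xb) ^ 7))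
          * deriv (ybar a b c d y) xb
      + (a0 (phi a b c xb) / (b ^ 5 * (1 + a * xb) ^ 10)
          - 4 * a * a1 (phi a b c xb) / (b ^ 4 * (1 + a * xb) ^ 9)
          + 12 * a ^ 2 * a2 (phi a b c xb) / (b ^ 3 * (1 + a * xb) ^ 8))
          * ybar a b c d y xb = 0 := by
  have hderiv : ∀ k ≤ 5,
      iteratedDeriv k (ybar a b c d y) xb = ybarDerivFormula a b c d y k xb := by
    intro k hk
    rw [← ybarDerivFormula_zero]
    exact eqOn_iteratedDeriv_of_hasDerivAt (g := ybarDerivFormula a b c d y)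
      (isOpen_setOf_phi_mem hb hU)
      (fun k hk x hx ↦ hasDerivAt_ybarDerivFormula hk hb hU hy hx.1 hx.2) hk ⟨ht, hφ⟩
  rw [← iteratedDeriv_one, hderiv 5 le_rfl, hderiv 2 (by norm_num), hderiv 1 (by norm_num),
    ybarDerivFormula_five, ybarDerivFormula_two, ybarDerivFormula_one, ybar]
  calc _ = d / (b ^ 5 * (1 + a * xb) ^ 6) * (iteratedDeriv 5 y (phi a b c xb)
        + a2 (phi a b c xb) * iteratedDeriv 2 y (phi a b c xb)
        + a1 (phi a b c xb) * deriv y (phi a b c xb) + a0 (phi a b c xb) * y (phi a b c xb)) := by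
        field_simp
        ring
    _ = 0 := by rw [hode _ hφ, mul_zero]

/-- the structure invariance transformation for
`y⁽⁵⁾ + a₂ y″ + a₁ y′ + a₀ y = 0`: the transformed function
`ȳ(x̄) = d (1+a x̄)⁴ y(φ(x̄))` satisfies `ȳ⁽⁵⁾ + ā₂ ȳ″ + ā₁ ȳ′ + ā₀ ȳ = 0` with
`ā₂ = (a₂∘φ)/(b³ t⁶)`, `ā₁ = (a₁∘φ)/(b⁴ t⁸) − 6a (a₂∘φ)/(b³ t⁷)` and
`ā₀ = (a₀∘φ)/(b⁵ t¹⁰) − 4a (a₁∘φ)/(b⁴ t⁹) + 12a² (a₂∘φ)/(b³ t⁸)`,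
where `t(x̄) = 1 + a x̄`. -/
theorem stmt_5 (a b c d : ℝ) (hb : b ≠ 0) (hd : d ≠ 0)
    (a0 a1 a2 : ℝ → ℝ) (U : Set ℝ) (hU : IsOpen U) (y : ℝ → ℝ)
    (hy : ContDiffOn ℝ 5 y U)
    (hode : ∀ x ∈ U,
      iteratedDeriv 5 y x + a2 x * iteratedDeriv 2 y x
        + a1 x * deriv y x + a0 x * y x = 0)
    (xb : ℝ) (ht : 1 + a * xb ≠ 0) (hφ : phi a b c xb ∈ U) :
    iteratedDeriv 5 (ybar a b c d y) xb
      + (a2 (phi a b c xb) / (b ^ 3 * (1 + a * xb) ^ 6))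
          * iteratedDeriv 2 (ybar a b c d y) xb
      + (a1 (phi a b c xb) / (b ^ 4 * (1 + a * xb) ^ 8)
          - 6 * a * a2 (phi a b c xb) / (b ^ 3 * (1 + a * xb) ^ 7))
          * deriv (ybar a b c d y) xb
      + (a0 (phi a b c xb) / (b ^ 5 * (1 + a * xb) ^ 10)
          - 4 * a * a1 (phi a b c xb) / (b ^ 4 * (1 + a * xb) ^ 9)
          + 12 * a ^ 2 * a2 (phi a b c xb) / (b ^ 3 * (1 + a * xb) ^ 8))
          * ybar a b c d y xb = 0 :=
  stmt_5_general a b c d hb a0 a1 a2 U hU y hy hode xb ht hφ
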